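/- (Kannan-type fixed point theorem for multiplicative metrics) Let (X,d) be a complete multiplicative metric space and f : X → X satisfy d(f(x), f(y)) ≤ (d(f(x), x) · d(f(y), y))^λ for all x,y ∈ X, where λ ∈ [0, 1/2) is a constant. Then f has a unique fixed point, and for any x ∈ X the iterative sequence (fⁿ(x)) multiplicatively converges to the fixed point. -/

import Mathlib

open Filter Topology

noncomputable def mstar (a : ℝ) : ℝ := if 1 ≤ a then a else a⁻¹

/-!
Taking logarithms turns a multiplicative metric `d` into the ordinary metric `log ∘ d`, in which
multiplicative Cauchy sequences and limits are the usual ones and the hypothesis on `f` becomes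
Kannan's condition `dist (f x) (f y) ≤ λ (dist (f x) x + dist (f y) y)`. Applied to `(f x, x)` it
gives `dist (f x) (f² x) ≤ k · dist x (f x)` with `k = λ / (1 - λ) < 1`, so every orbit is Cauchy;
letting `n → ∞` in the condition for `(z, fⁿ x)` shows that its limit `z` is fixed, and the
condition for two fixed points forces them to coincide.
-/

section Kannan

variable {α : Type*} [MetricSpace α] {f : α → α} {lam : ℝ}

theorem dist_apply_apply_le_of_kannan (hlam : lam < 1)
    (hf : ∀ x y, dist (f x) (f y) ≤ lam * (dist (f x) x + dist (f y) y)) (x : α) :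
    dist (f x) (f (f x)) ≤ lam / (1 - lam) * dist x (f x) := by
  rw [div_mul_eq_mul_div, le_div_iff₀ (by linarith), dist_comm, dist_comm x]
  linarith [hf (f x) x]

theorem dist_iterate_succ_le_geometric_of_kannan (hlam0 : 0 ≤ lam) (hlam1 : lam < 1)
    (hf : ∀ x y, dist (f x) (f y) ≤ lam * (dist (f x) x + dist (f y) y)) (x : α) (n : ℕ) :
    dist (f^[n] x) (f^[n + 1] x) ≤ dist x (f x) * (lam / (1 - lam)) ^ n := by
  induction n with
  | zero => simp
  | succ n ih =>
    have hk : 0 ≤ lam / (1 - lam) := div_nonneg hlam0 (by linarith)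
    calc dist (f^[n + 1] x) (f^[n + 2] x)
        = dist (f (f^[n] x)) (f (f (f^[n] x))) := by
          simp only [Function.iterate_succ_apply']
      _ ≤ lam / (1 - lam) * dist (f^[n] x) (f^[n + 1] x) := by
          rw [Function.iterate_succ_apply']
          exact dist_apply_apply_le_of_kannan hlam1 hf _
      _ ≤ lam / (1 - lam) * (dist x (f x) * (lam / (1 - lam)) ^ n) := by gcongr
      _ = dist x (f x) * (lam / (1 - lam)) ^ (n + 1) := by ring

theorem isFixedPt_of_tendsto_iterate_of_kannan (hlam : lam < 1)
    (hf : ∀ x y, dist (f x) (f y) ≤ lam * (dist (f x) x + dist (f y) y)) {x z : α}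
    (hx : Tendsto (fun n => f^[n] x) atTop (𝓝 z)) : Function.IsFixedPt f z := by
  have hx' : Tendsto (fun n => f^[n + 1] x) atTop (𝓝 z) := hx.comp (tendsto_add_atTop_nat 1)
  have hle : dist (f z) z ≤ lam * (dist (f z) z + dist z z) :=
    le_of_tendsto_of_tendsto' (tendsto_const_nhds.dist hx')
      (tendsto_const_nhds.mul (tendsto_const_nhds.add (hx'.dist hx))) fun n => by
        rw [Function.iterate_succ_apply']
        exact hf z _
  rw [dist_self, add_zero] at hle
  exact dist_le_zero.1 (by nlinarith [dist_nonneg (x := f z) (y := z)])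

theorem eq_of_isFixedPt_of_kannan
    (hf : ∀ x y, dist (f x) (f y) ≤ lam * (dist (f x) x + dist (f y) y)) {y z : α}
    (hy : Function.IsFixedPt f y) (hz : Function.IsFixedPt f z) : y = z := by
  have := hf y z
  rw [hy.eq, hz.eq, dist_self, dist_self, add_zero, mul_zero] at this
  exact dist_le_zero.1 this

theorem exists_isFixedPt_tendsto_iterate_of_kannan [CompleteSpace α] (hlam0 : 0 ≤ lam)
    (hlam1 : lam < 1 / 2) (hf : ∀ x y, dist (f x) (f y) ≤ lam * (dist (f x) x + dist (f y) y))
    (x : α) : ∃ z, Function.IsFixedPt f z ∧ Tendsto (fun n => f^[n] x) atTop (𝓝 z) := by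
  have hk : lam / (1 - lam) < 1 := by rw [div_lt_one (by linarith)]; linarith
  obtain ⟨z, hz⟩ := cauchySeq_tendsto_of_complete <| cauchySeq_of_le_geometric _ _ hk
    (dist_iterate_succ_le_geometric_of_kannan hlam0 (by linarith) hf x)
  exact ⟨z, isFixedPt_of_tendsto_iterate_of_kannan (by linarith) hf hz, hz⟩

end Kannan

structure IsMultiplicativeMetric {X : Type*} (d : X → X → ℝ) : Prop where
  one_le : ∀ x y, 1 ≤ d x y
  eq_one_iff : ∀ x y, d x y = 1 ↔ x = y
  symm : ∀ x y, d x y = d y x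
  le_mul : ∀ x y z, d x z ≤ d x y * d y z

namespace IsMultiplicativeMetric

variable {X : Type*} {d : X → X → ℝ}

theorem pos (hd : IsMultiplicativeMetric d) (x y : X) : 0 < d x y :=
  one_pos.trans_le (hd.one_le x y)

noncomputable abbrev toMetricSpace (hd : IsMultiplicativeMetric d) : MetricSpace X where
  dist x y := Real.log (d x y)
  dist_self x := by rw [(hd.eq_one_iff x x).2 rfl, Real.log_one]
  dist_comm x y := by rw [hd.symm]
  dist_triangle x y z := by
    rw [← Real.log_mul (hd.pos x y).ne' (hd.pos y z).ne']
    exact Real.log_le_log (hd.pos x z) (hd.le_mul x y z)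
  eq_of_dist_eq_zero {x y} h := by
    rw [← hd.eq_one_iff, ← Real.exp_log (hd.pos x y), h, Real.exp_zero]

theorem dist_eq (hd : IsMultiplicativeMetric d) (x y : X) :
    letI := hd.toMetricSpace
    dist x y = Real.log (d x y) :=
  rfl

theorem tendsto_nhds_iff (hd : IsMultiplicativeMetric d) {ι : Type*} {l : Filter ι} {u : ι → X}
    {z : X} :
    letI := hd.toMetricSpace
    Tendsto u l (𝓝 z) ↔ Tendsto (fun n => d (u n) z) l (𝓝 1) := by
  let := hd.toMetricSpace
  rw [tendsto_iff_dist_tendsto_zero]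
  constructor
  · intro h
    simpa [hd.dist_eq, Real.exp_log (hd.pos _ _)] using h.rexp
  · intro h
    simpa [hd.dist_eq] using h.log one_ne_zero

theorem completeSpace (hd : IsMultiplicativeMetric d)
    (hcomp : ∀ u : ℕ → X, (∀ ε > 1, ∃ N, ∀ m ≥ N, ∀ n ≥ N, d (u m) (u n) < ε) →
      ∃ z, Tendsto (fun n => d (u n) z) atTop (𝓝 1)) :
    letI := hd.toMetricSpace
    CompleteSpace X := by
  let := hd.toMetricSpace
  refine Metric.complete_of_cauchySeq_tendsto fun u hu => ?_
  obtain ⟨z, hz⟩ := hcomp u fun ε hε => by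
    simpa [hd.dist_eq, Real.log_lt_iff_lt_exp (hd.pos _ _), Real.exp_log (by linarith : 0 < ε)]
      using Metric.cauchySeq_iff.1 hu (Real.log ε) (Real.log_pos hε)
  exact ⟨z, hd.tendsto_nhds_iff.2 hz⟩

theorem dist_apply_le_of_le_rpow (hd : IsMultiplicativeMetric d) {f : X → X} {lam : ℝ}
    (hf : ∀ x y, d (f x) (f y) ≤ (d (f x) x * d (f y) y) ^ lam) (x y : X) :
    letI := hd.toMetricSpace
    dist (f x) (f y) ≤ lam * (dist (f x) x + dist (f y) y) := by
  simp only [hd.dist_eq]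
  rw [← Real.log_mul (hd.pos _ _).ne' (hd.pos _ _).ne',
    ← Real.log_rpow (mul_pos (hd.pos _ _) (hd.pos _ _))]
  exact Real.log_le_log (hd.pos _ _) (hf x y)

end IsMultiplicativeMetric

theorem stmt19 {X : Type*} [Nonempty X] (d : X → X → ℝ)
    (h1 : ∀ x y, 1 ≤ d x y) (h2 : ∀ x y, d x y = 1 ↔ x = y)
    (hsym : ∀ x y, d x y = d y x)
    (htri : ∀ x y z, d x z ≤ d x y * d y z)
    (hcomp : ∀ u : ℕ → X, (∀ ε > 1, ∃ N, ∀ m ≥ N, ∀ n ≥ N, d (u m) (u n) < ε) →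
      ∃ z, Tendsto (fun n => d (u n) z) atTop (𝓝 1))
    (f : X → X) (lam : ℝ) (hlam0 : 0 ≤ lam) (hlam1 : lam < 1/2)
    (hf : ∀ x y, d (f x) (f y) ≤ (d (f x) x * d (f y) y) ^ lam) :
    ∃ z, f z = z ∧ (∀ y, f y = y → y = z) ∧
      ∀ x₀, Tendsto (fun n => d (f^[n] x₀) z) atTop (𝓝 1) := by
  have hd : IsMultiplicativeMetric d := ⟨h1, h2, hsym, htri⟩
  let := hd.toMetricSpace
  have := hd.completeSpace hcomp
  have hkannan := hd.dist_apply_le_of_le_rpow hf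
  have hlimit := exists_isFixedPt_tendsto_iterate_of_kannan hlam0 hlam1 hkannan
  obtain ⟨z, hz, -⟩ := hlimit (Classical.arbitrary X)
  have hunique : ∀ y, f y = y → y = z := fun y hy => eq_of_isFixedPt_of_kannan hkannan hy hz
  refine ⟨z, hz, hunique, fun x₀ => ?_⟩
  obtain ⟨z', hz', hx₀⟩ := hlimit x₀
  rw [← hunique z' hz']
  exact hd.tendsto_nhds_iff.1 hx₀
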